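/- Let X be a rearrangement invariant Banach function space on (0, ∞) whose ideal X_a of order continuous elements is non-trivial. Then for every f ∈ X, dist(f*, X_a) = lim_{n→∞} ‖ f* · χ_{(0, 1/n) ∪ (n, ∞)} ‖_X, where f* is the non-increasing rearrangement of f. -/

import Mathlib

open Filter Topology MeasureTheory Set

/-- A **Banach ideal space** on a measure space `(α, μ)`: a collection of (real-valued)
measurable functions with a complete lattice-compatible norm satisfying the ideal property. -/
structure BanachIdealSpace (α : Type*) [MeasurableSpace α] (μ : Measure α) where
  Mem : (α → ℝ) → Prop
  N : (α → ℝ) → ℝ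
  mem_zero : Mem 0
  mem_add : ∀ f g, Mem f → Mem g → Mem (f + g)
  mem_smul : ∀ (c : ℝ) f, Mem f → Mem (c • f)
  measurable : ∀ f, Mem f → AEMeasurable f μ
  N_nonneg : ∀ f, 0 ≤ N f
  N_zero : N 0 = 0
  N_eq_zero : ∀ f, Mem f → N f = 0 → (∀ᵐ x ∂μ, f x = 0)
  N_add : ∀ f g, Mem f → Mem g → N (f + g) ≤ N f + N g
  N_smul : ∀ (c : ℝ) f, N (c • f) = |c| * N f
  ideal : ∀ f g, AEMeasurable f μ → (∀ᵐ x ∂μ, |f x| ≤ |g x|) → Mem g →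
    Mem f ∧ N f ≤ N g
  complete : ∀ u : ℕ → (α → ℝ), (∀ n, Mem (u n)) →
    (∀ ε : ℝ, 0 < ε → ∃ n₀ : ℕ, ∀ m n, n₀ ≤ m → n₀ ≤ n → N (u m - u n) < ε) →
    ∃ f, Mem f ∧ Tendsto (fun n => N (u n - f)) atTop (𝓝 0)

namespace BanachIdealSpace

variable {α : Type*} [MeasurableSpace α] {μ : Measure α}

/-- Distance (w.r.t. a norm functional `N`) from `f` to a set `S` of functions. -/
noncomputable def distIn (N : (α → ℝ) → ℝ) (f : α → ℝ) (S : Set (α → ℝ)) : ℝ :=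
  sInf ((fun g => N (f - g)) '' S)

/-- The set of **order continuous elements** of a (generalized) function space given by a
membership predicate `Mem` and a norm `N`: those `f` such that every sequence `uₙ` with
`0 ≤ uₙ ≤ |f|` a.e., a.e. non-increasing and converging to `0` a.e., satisfies `N (uₙ) → 0`. -/
def ocSet (μ : Measure α) (Mem : (α → ℝ) → Prop) (N : (α → ℝ) → ℝ) : Set (α → ℝ) :=
  {f | Mem f ∧ ∀ u : ℕ → (α → ℝ), (∀ n, Mem (u n)) →
    (∀ n, ∀ᵐ x ∂μ, 0 ≤ u n x ∧ u n x ≤ |f x|) →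
    (∀ n, ∀ᵐ x ∂μ, u (n + 1) x ≤ u n x) →
    (∀ᵐ x ∂μ, Tendsto (fun n => u n x) atTop (𝓝 0)) →
    Tendsto (fun n => N (u n)) atTop (𝓝 0)}

/-- The ideal `X_a` of order continuous elements of a Banach ideal space `X`. -/
def oc (X : BanachIdealSpace α μ) : Set (α → ℝ) := ocSet μ X.Mem X.N

/-- An **order ideal** of a Banach ideal space: a closed solid linear subspace. -/
structure IsOrderIdeal (X : BanachIdealSpace α μ) (J : Set (α → ℝ)) : Prop where
  subset : ∀ f ∈ J, X.Mem f
  zero : (0 : α → ℝ) ∈ J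
  add : ∀ f g, f ∈ J → g ∈ J → f + g ∈ J
  smul : ∀ (c : ℝ) f, f ∈ J → c • f ∈ J
  solid : ∀ f g, f ∈ J → X.Mem g → (∀ᵐ x ∂μ, |g x| ≤ |f x|) → g ∈ J
  closed : ∀ (u : ℕ → (α → ℝ)) f, (∀ n, u n ∈ J) → X.Mem f →
    Tendsto (fun n => X.N (f - u n)) atTop (𝓝 0) → f ∈ J

/-- The **Fatou property** of a Banach ideal space. -/
def Fatou (X : BanachIdealSpace α μ) : Prop :=
  ∀ (u : ℕ → (α → ℝ)) (f : α → ℝ), (∀ n, X.Mem (u n)) → AEMeasurable f μ →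
    (∀ᵐ x ∂μ, 0 ≤ u 0 x) → (∀ᵐ x ∂μ, Monotone fun n => u n x) →
    (∀ᵐ x ∂μ, Tendsto (fun n => u n x) atTop (𝓝 (f x))) →
    BddAbove (Set.range fun n => X.N (u n)) →
    X.Mem f ∧ Tendsto (fun n => X.N (u n)) atTop (𝓝 (X.N f))

/-- The **semi-Fatou property**: if `0 ≤ uₙ ↑ f ∈ X` then `‖uₙ‖ ↑ ‖f‖`. -/
def SemiFatou (X : BanachIdealSpace α μ) : Prop :=
  ∀ (u : ℕ → (α → ℝ)) (f : α → ℝ), (∀ n, X.Mem (u n)) → X.Mem f →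
    (∀ᵐ x ∂μ, 0 ≤ u 0 x) → (∀ᵐ x ∂μ, Monotone fun n => u n x) →
    (∀ᵐ x ∂μ, Tendsto (fun n => u n x) atTop (𝓝 (f x))) →
    Tendsto (fun n => X.N (u n)) atTop (𝓝 (X.N f))

/-- A Banach ideal space is **rearrangement invariant (symmetric)**: equimeasurable
functions belong to the space simultaneously and have equal norms. -/
def Symmetric (X : BanachIdealSpace α μ) : Prop :=
  ∀ f g, AEMeasurable f μ →
    (∀ lam : ℝ, 0 < lam → μ {x | lam < |f x|} = μ {x | lam < |g x|}) →
    X.Mem g → X.Mem f ∧ X.N f = X.N g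

/-- The **non-increasing rearrangement** of a function `f` (w.r.t. the measure `μ`). -/
noncomputable def rear (μ : Measure α) (f : α → ℝ) (t : ℝ) : ℝ :=
  sInf {lam : ℝ | 0 < lam ∧ μ {x | lam < |f x|} ≤ ENNReal.ofReal t}

/-- A (generalized) function space given by `(Mem, N)` contains a **lattice isometric copy
of `ℓ∞`**: there is a linear map from bounded sequences which preserves absolute values
(hence the lattice operations) and is an isometry for the sup norm on bounded sequences. -/
def HasLatticeCopyLinf (Mem : (α → ℝ) → Prop) (N : (α → ℝ) → ℝ) : Prop :=
  ∃ T : (ℕ → ℝ) → (α → ℝ),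
    (∀ x y, T (x + y) = T x + T y) ∧
    (∀ (c : ℝ) x, T (c • x) = c • T x) ∧
    (∀ x, T (fun n => |x n|) = fun t => |T x t|) ∧
    (∀ x : ℕ → ℝ, BddAbove (Set.range fun n => |x n|) →
      Mem (T x) ∧ N (T x) = ⨆ n, |x n|)

end BanachIdealSpace

open BanachIdealSpace

/-!
Write `F = f*` and `Sₙ = (0, 1/n) ∪ (n, ∞)`. Since `X_a ≠ {0}` and `X` is symmetric over a
nonatomic measure, indicators of sets of small measure have small norm; with Egorov's theorem this
puts every function of `X` bounded by a multiple of an indicator of finite measure into `X_a`.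
As `F` is non-increasing, `F 𝟙_{Sₙᶜ}` is such a function, so `dist(F, X_a) ≤ ‖F 𝟙_{Sₙ}‖`.
Conversely, for `h ∈ X_a` we have `‖F 𝟙_{Sₙ}‖ ≤ ‖F - h‖ + ‖h 𝟙_{Sₙ}‖`, and the last term tends
to `0` by order continuity of `h`, because `Sₙ` decreases to the empty set.
-/

open scoped ENNReal

/-- By Sierpiński's theorem, every measure without atoms has this property. -/
def MeasureTheory.Measure.HasIntermediateSubsets {α : Type*} [MeasurableSpace α]
    (μ : Measure α) : Prop :=
  ∀ ⦃S : Set α⦄, MeasurableSet S → μ S ≠ ∞ → ∀ c ≤ μ S, ∃ t ⊆ S, MeasurableSet t ∧ μ t = c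

namespace MeasureTheory.Measure.HasIntermediateSubsets

variable {α : Type*} [MeasurableSpace α] {μ : Measure α}

theorem restrict (hμ : μ.HasIntermediateSubsets) {s : Set α} (hs : MeasurableSet s) :
    (μ.restrict s).HasIntermediateSubsets := by
  intro S hS hfin c hc
  rw [restrict_apply hS] at hfin hc
  obtain ⟨t, hts, ht, rfl⟩ := hμ (hS.inter hs) hfin c hc
  refine ⟨t, hts.trans inter_subset_left, ht, ?_⟩
  rw [restrict_apply ht, inter_eq_self_of_subset_left (hts.trans inter_subset_right)]

end MeasureTheory.Measure.HasIntermediateSubsets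

theorem Real.volume_inter_Iio_le_add (S : Set ℝ) (x y : ℝ) :
    volume (S ∩ Iio x) ≤ volume (S ∩ Iio y) + ENNReal.ofReal (dist x y) :=
  calc volume (S ∩ Iio x) ≤ volume ((S ∩ Iio y) ∪ Ico y x) :=
        measure_mono fun z ⟨hzS, hzx⟩ => (lt_or_ge z y).imp (⟨hzS, ·⟩) (⟨·, hzx⟩)
    _ ≤ volume (S ∩ Iio y) + volume (Ico y x) := measure_union_le _ _
    _ ≤ volume (S ∩ Iio y) + ENNReal.ofReal (dist x y) := by
        rw [Real.volume_Ico, Real.dist_eq]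
        gcongr
        exact le_abs_self _

theorem Real.hasIntermediateSubsets_volume : (volume : Measure ℝ).HasIntermediateSubsets := by
  intro S hS hfin c hc
  rcases eq_or_ne c 0 with rfl | hc0
  · exact ⟨∅, empty_subset _, .empty, measure_empty⟩
  rcases hc.eq_or_lt with rfl | hlt
  · exact ⟨S, Subset.rfl, hS, rfl⟩
  have hfin' : ∀ r, volume (S ∩ Iio r) ≠ ∞ :=
    fun r => ne_top_of_le_ne_top hfin (measure_mono inter_subset_left)
  have hcont : Continuous fun r => (volume (S ∩ Iio r)).toReal := by
    refine (LipschitzWith.of_le_add fun x y => ?_).continuous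
    have := ENNReal.toReal_mono (by simp [hfin' y]) (Real.volume_inter_Iio_le_add S x y)
    rwa [ENNReal.toReal_add (hfin' y) ENNReal.ofReal_ne_top,
      ENNReal.toReal_ofReal dist_nonneg] at this
  have hbot : Tendsto (fun r => volume (S ∩ Iio r)) atBot (𝓝 0) := by
    have := tendsto_measure_iInter_atBot (μ := volume)
      (fun r => (hS.inter measurableSet_Iio).nullMeasurableSet)
      (fun a b hab => inter_subset_inter_right S (Iio_subset_Iio hab)) ⟨0, hfin' 0⟩
    rwa [show (⋂ r, S ∩ Iio r) = ∅ from eq_empty_of_forall_notMem fun z hz =>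
      lt_irrefl z (mem_iInter.1 hz z).2, measure_empty] at this
  have htop : Tendsto (fun r => volume (S ∩ Iio r)) atTop (𝓝 (volume S)) := by
    have := tendsto_measure_iUnion_atTop (μ := volume)
      (fun a b hab => inter_subset_inter_right S (Iio_subset_Iio hab))
    rwa [← inter_iUnion, iUnion_Iio, inter_univ] at this
  obtain ⟨a, ha⟩ := (hbot.eventually (eventually_le_nhds (pos_iff_ne_zero.2 hc0))).exists
  obtain ⟨b, hb⟩ := (htop.eventually (eventually_ge_nhds hlt)).exists
  obtain ⟨r, hr⟩ := mem_range_of_exists_le_of_exists_ge hcont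
    ⟨a, ENNReal.toReal_mono hlt.ne_top ha⟩ ⟨b, ENNReal.toReal_mono (hfin' b) hb⟩
  exact ⟨S ∩ Iio r, inter_subset_left, hS.inter measurableSet_Iio,
    (ENNReal.toReal_eq_toReal_iff' (hfin' r) hlt.ne_top).1 hr⟩

namespace BanachIdealSpace

variable {α : Type*} [MeasurableSpace α] {μ : Measure α} (X : BanachIdealSpace α μ)
  {f g h : α → ℝ} {s t : Set α}

theorem mem_sub (hf : X.Mem f) (hg : X.Mem g) : X.Mem (f - g) := by
  simpa [sub_eq_add_neg] using X.mem_add _ _ hf (X.mem_smul (-1) g hg)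

theorem N_eq_zero_of_ae_eq_zero (hf : AEMeasurable f μ) (h0 : ∀ᵐ x ∂μ, f x = 0) : X.N f = 0 :=
  le_antisymm
    (X.N_zero ▸ (X.ideal f 0 hf (by filter_upwards [h0] with x hx; simp [hx]) X.mem_zero).2)
    (X.N_nonneg f)

theorem mem_indicator (hf : X.Mem f) (hs : MeasurableSet s) : X.Mem (s.indicator f) :=
  (X.ideal _ f ((X.measurable f hf).indicator hs)
    (.of_forall fun x => norm_indicator_le_norm_self f x) hf).1

theorem N_indicator_mono (hf : X.Mem f) (hs : MeasurableSet s) (ht : MeasurableSet t)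
    (hst : s ⊆ t) : X.N (s.indicator f) ≤ X.N (t.indicator f) :=
  (X.ideal _ _ ((X.measurable f hf).indicator hs)
    (.of_forall fun x => norm_indicator_le_of_subset hst f x) (X.mem_indicator hf ht)).2

theorem N_indicator_le (hf : X.Mem f) (hs : MeasurableSet s) : X.N (s.indicator f) ≤ X.N f := by
  simpa using X.N_indicator_mono hf hs .univ (subset_univ s)

theorem N_indicator_le_N_sub_add (hf : X.Mem f) (hh : X.Mem h) (hs : MeasurableSet s) :
    X.N (s.indicator f) ≤ X.N (f - h) + X.N (s.indicator h) :=
  calc X.N (s.indicator f) = X.N (s.indicator (f - h) + s.indicator h) := by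
        rw [← indicator_add', sub_add_cancel]
    _ ≤ X.N (s.indicator (f - h)) + X.N (s.indicator h) :=
        X.N_add _ _ (X.mem_indicator (X.mem_sub hf hh) hs) (X.mem_indicator hh hs)
    _ ≤ X.N (f - h) + X.N (s.indicator h) := by
        gcongr
        exact X.N_indicator_le (X.mem_sub hf hh) hs

theorem zero_mem_oc : (0 : α → ℝ) ∈ X.oc := by
  refine ⟨X.mem_zero, fun u hu hbd _ _ => ?_⟩
  have hN : ∀ n, X.N (u n) = 0 := fun n => X.N_eq_zero_of_ae_eq_zero (X.measurable _ (hu n))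
    (by filter_upwards [hbd n] with x hx; simpa using le_antisymm (by simpa using hx.2) hx.1)
  simp [hN]

theorem mem_oc_of_ae_abs_le_mul (hf : X.Mem f) (hg : g ∈ X.oc) {c : ℝ} (hc : 0 < c)
    (hle : ∀ᵐ x ∂μ, |f x| ≤ c * |g x|) : f ∈ X.oc := by
  refine ⟨hf, fun u hu hbd hanti hlim => ?_⟩
  have hscaled := hg.2 (fun n => c⁻¹ • u n) (fun n => X.mem_smul _ _ (hu n))
    (fun n => by
      filter_upwards [hbd n, hle] with x hx hfx
      simp only [Pi.smul_apply, smul_eq_mul]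
      exact ⟨mul_nonneg (inv_nonneg.2 hc.le) hx.1, (inv_mul_le_iff₀ hc).2 (hx.2.trans hfx)⟩)
    (fun n => by
      filter_upwards [hanti n] with x hx
      exact mul_le_mul_of_nonneg_left hx (by positivity))
    (by filter_upwards [hlim] with x hx; simpa using hx.const_mul c⁻¹)
  have hN : ∀ n, X.N (u n) = c * X.N (c⁻¹ • u n) := fun n => by
    rw [X.N_smul, abs_inv, abs_of_pos hc, mul_inv_cancel_left₀ hc.ne']
  simpa [hN] using hscaled.const_mul c

theorem tendsto_N_indicator_of_mem_oc (hh : h ∈ X.oc) {S : ℕ → Set α}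
    (hS : ∀ n, MeasurableSet (S n)) (hanti : Antitone S)
    (hlim : ∀ᵐ x ∂μ, ∀ᶠ n in atTop, x ∉ S n) :
    Tendsto (fun n => X.N ((S n).indicator h)) atTop (𝓝 0) := by
  have habs : X.Mem fun x => |h x| :=
    (X.ideal _ h (X.measurable h hh.1).abs (.of_forall fun x => (abs_abs _).le) hh.1).1
  have hu := hh.2 (fun n => (S n).indicator fun x => |h x|)
    (fun n => X.mem_indicator habs (hS n))
    (fun n => .of_forall fun x =>
      ⟨indicator_nonneg (fun _ _ => abs_nonneg _) x,
        indicator_le_self' (fun _ _ => abs_nonneg _) x⟩)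
    (fun n => .of_forall fun x => indicator_le_indicator_of_subset (hanti n.le_succ)
      (fun _ => abs_nonneg _) x)
    (by
      filter_upwards [hlim] with x hx
      exact tendsto_nhds_of_eventually_eq (hx.mono fun n hn => indicator_of_notMem hn _))
  refine squeeze_zero (fun n => X.N_nonneg _) (fun n => ?_) hu
  refine (X.ideal _ _ ((X.measurable h hh.1).indicator (hS n)) (.of_forall fun x => ?_)
    (X.mem_indicator habs (hS n))).2
  by_cases hx : x ∈ S n <;> simp [hx]

theorem distIn_le (hh : h ∈ X.oc) : distIn X.N f X.oc ≤ X.N (f - h) :=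
  csInf_le ⟨0, by rintro _ ⟨g, -, rfl⟩; exact X.N_nonneg _⟩ ⟨h, hh, rfl⟩

theorem le_distIn {c : ℝ} (hc : ∀ h ∈ X.oc, c ≤ X.N (f - h)) : c ≤ distIn X.N f X.oc :=
  le_csInf ⟨_, 0, X.zero_mem_oc, rfl⟩ (by rintro _ ⟨h, hh, rfl⟩; exact hc h hh)

end BanachIdealSpace

theorem Filter.Tendsto.of_forall_eventually_le_mul {ι : Type*} {l : Filter ι} {u : ι → ℝ}
    (h0 : ∀ i, 0 ≤ u i) {C : ℝ} (h : ∀ ε > 0, ∀ᶠ i in l, u i ≤ ε * C) : Tendsto u l (𝓝 0) := by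
  refine tendsto_order.2 ⟨fun a ha => .of_forall fun i => ha.trans_le (h0 i), fun a ha => ?_⟩
  have hC : 0 < |C| + 1 := by positivity
  filter_upwards [h (a / (|C| + 1)) (by positivity)] with i hi
  calc u i ≤ a / (|C| + 1) * C := hi
    _ ≤ a / (|C| + 1) * |C| := by gcongr; exact le_abs_self C
    _ < a := by rw [div_mul_eq_mul_div, div_lt_iff₀ hC]; nlinarith

theorem Set.setOf_lt_abs_indicator_one {α : Type*} {s : Set α} {lam : ℝ} (hlam : 0 ≤ lam) :
    {x | lam < |s.indicator (1 : α → ℝ) x|} = if lam < 1 then s else ∅ := by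
  ext x
  by_cases hx : x ∈ s <;> split_ifs <;> simp [*, hlam.not_gt]

namespace BanachIdealSpace

variable {α : Type*} [MeasurableSpace α] {μ : Measure α} (X : BanachIdealSpace α μ)
  {f : α → ℝ} {s t : Set α}

theorem indicator_one_of_measure_eq (hsymm : X.Symmetric) (hs : MeasurableSet s)
    (hst : μ s = μ t) (ht : X.Mem (t.indicator 1)) :
    X.Mem (s.indicator 1) ∧ X.N (s.indicator 1) = X.N (t.indicator 1) :=
  hsymm _ _ (measurable_one.indicator hs).aemeasurable (fun lam hlam => by
    rw [setOf_lt_abs_indicator_one hlam.le, setOf_lt_abs_indicator_one hlam.le]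
    split_ifs <;> simp [hst]) ht

theorem indicator_one_mono (ht : X.Mem (t.indicator 1)) (hs : MeasurableSet s) (hst : s ⊆ t) :
    X.Mem (s.indicator 1) ∧ X.N (s.indicator 1) ≤ X.N (t.indicator 1) :=
  X.ideal _ _ (measurable_one.indicator hs).aemeasurable
    (.of_forall fun x => norm_indicator_le_of_subset (E := ℝ) hst 1 x) ht

theorem exists_indicator_one_mem_oc [SigmaFinite μ]
    (hXa : ∃ g ∈ X.oc, ¬ ∀ᵐ x ∂μ, g x = 0) :
    ∃ B, MeasurableSet B ∧ 0 < μ B ∧ μ B < ∞ ∧ B.indicator 1 ∈ X.oc := by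
  obtain ⟨g, hg, hg0⟩ := hXa
  have hgm := X.measurable g hg.1
  obtain ⟨k, hk⟩ : ∃ k : ℕ, 0 < μ {x | 1 / ((k : ℝ) + 1) < |hgm.mk g x|} := by
    by_contra! h
    refine hg0 ?_
    filter_upwards [hgm.ae_eq_mk, measure_eq_zero_iff_ae_notMem.1
      (measure_iUnion_null fun k => nonpos_iff_eq_zero.1 (h k))] with x hx hxU
    by_contra hne
    exact hxU (mem_iUnion.2 (exists_nat_one_div_lt (abs_pos.2 (hx ▸ hne))))
  set δ : ℝ := 1 / ((k : ℝ) + 1)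
  obtain ⟨B, hB, hBsub, hBpos, hBfin⟩ :=
    Measure.exists_subset_measure_lt_top
      (measurableSet_lt measurable_const hgm.measurable_mk.abs) hk
  have hle : ∀ᵐ x ∂μ, |B.indicator 1 x| ≤ δ⁻¹ * |g x| := by
    filter_upwards [hgm.ae_eq_mk] with x hx
    by_cases hxB : x ∈ B
    · rw [indicator_of_mem hxB, Pi.one_apply, abs_one, ← div_eq_inv_mul,
        one_le_div (by positivity), hx]
      exact (hBsub hxB).le
    · simp only [indicator_of_notMem hxB, abs_zero]
      positivity
  have hmem : X.Mem (B.indicator 1) :=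
    (X.ideal _ (δ⁻¹ • g) (measurable_one.indicator hB).aemeasurable
      (by simpa [abs_mul, abs_of_pos (by positivity : 0 < δ⁻¹)] using hle)
      (X.mem_smul _ _ hg.1)).1
  exact ⟨B, hB, hBpos, hBfin, X.mem_oc_of_ae_abs_le_mul hmem hg (by positivity) hle⟩

/-- Indicators of sets of small measure have small norm: halve `B` repeatedly, use order
continuity of `𝟙_B` along the halvings, and move any small set inside a halving by symmetry. -/
theorem exists_N_indicator_one_le (hμ : μ.HasIntermediateSubsets) (hsymm : X.Symmetric)
    {B : Set α} (hB : MeasurableSet B) (hBpos : 0 < μ B) (hBfin : μ B < ∞)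
    (hBoc : B.indicator 1 ∈ X.oc) {ε : ℝ} (hε : 0 < ε) :
    ∃ η : ℝ, 0 < η ∧ ∀ A, MeasurableSet A → μ A ≤ ENNReal.ofReal η →
      X.Mem (A.indicator 1) ∧ X.N (A.indicator 1) ≤ ε := by
  choose! half half_subset half_meas measure_half using
    fun D (hD : MeasurableSet D) (hfin : μ D ≠ ∞) => hμ hD hfin (μ D / 2) ENNReal.half_le_self
  set D : ℕ → Set α := fun k => half^[k] B
  have hD_succ : ∀ k, D (k + 1) = half (D k) := fun k => Function.iterate_succ_apply' ..
  have hD : ∀ k, MeasurableSet (D k) ∧ μ (D k) = μ B * 2⁻¹ ^ k := by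
    intro k
    induction k with
    | zero => simp [D, hB]
    | succ k ih =>
      have hfin : μ (D k) ≠ ∞ := by rw [ih.2]; finiteness
      rw [hD_succ, measure_half _ ih.1 hfin, ih.2, pow_succ, div_eq_mul_inv, mul_assoc]
      exact ⟨half_meas _ ih.1 hfin, rfl⟩
  have hanti : Antitone D :=
    antitone_nat_of_succ_le fun k =>
      hD_succ k ▸ half_subset _ (hD k).1 (by rw [(hD k).2]; finiteness)
  have hDB : ∀ k, D k ⊆ B := fun k => hanti (Nat.zero_le k)
  have hnull : μ (⋂ k, D k) = 0 := by
    have hlim : Tendsto (fun k : ℕ => μ B * 2⁻¹ ^ k) atTop (𝓝 0) := by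
      simpa using ENNReal.Tendsto.const_mul
        (ENNReal.tendsto_pow_atTop_nhds_zero_of_lt_one (by norm_num : (2⁻¹ : ℝ≥0∞) < 1))
        (Or.inr hBfin.ne)
    exact le_antisymm
      (ge_of_tendsto' hlim fun k => (measure_mono (iInter_subset D k)).trans_eq (hD k).2) bot_le
  have hlim : ∀ᵐ x ∂μ, ∀ᶠ k in atTop, x ∉ D k := by
    filter_upwards [measure_eq_zero_iff_ae_notMem.1 hnull] with x hx
    obtain ⟨k, hk⟩ := not_forall.1 (mt mem_iInter.2 hx)
    exact eventually_atTop.2 ⟨k, fun j hj hxj => hk (hanti hj hxj)⟩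
  have hDind : ∀ k, (D k).indicator (B.indicator 1) = (D k).indicator (1 : α → ℝ) := fun k => by
    rw [indicator_indicator, inter_eq_left.2 (hDB k)]
  obtain ⟨k, hk⟩ := ((X.tendsto_N_indicator_of_mem_oc hBoc (fun k => (hD k).1) hanti
    hlim).eventually (eventually_le_nhds hε)).exists
  rw [hDind] at hk
  have hDk_pos : 0 < μ (D k) := by rw [(hD k).2]; exact ENNReal.mul_pos hBpos.ne' (by simp)
  have hDk_fin : μ (D k) ≠ ∞ := by rw [(hD k).2]; finiteness
  refine ⟨(μ (D k)).toReal, ENNReal.toReal_pos hDk_pos.ne' hDk_fin, fun A hA hAη => ?_⟩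
  rw [ENNReal.ofReal_toReal hDk_fin] at hAη
  obtain ⟨A', hA'D, hA', hA'A⟩ := hμ (hD k).1 hDk_fin _ hAη
  have hDk_mem := (X.indicator_one_mono hBoc.1 (hD k).1 (hDB k)).1
  obtain ⟨hA'mem, hA'N⟩ := X.indicator_one_mono hDk_mem hA' hA'D
  obtain ⟨hAmem, hAN⟩ := X.indicator_one_of_measure_eq hsymm hA hA'A.symm hA'mem
  exact ⟨hAmem, hAN ▸ hA'N.trans hk⟩

end BanachIdealSpace

namespace BanachIdealSpace

variable {α : Type*} [MeasurableSpace α] {μ : Measure α} [SigmaFinite μ]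
  (X : BanachIdealSpace α μ) (hμ : μ.HasIntermediateSubsets) (hsymm : X.Symmetric)
  (hXa : ∃ g ∈ X.oc, ¬ ∀ᵐ x ∂μ, g x = 0)
include hμ hsymm hXa

/-- Cut `A` into pieces of measure `η`, each of which has its indicator in `X`. -/
theorem indicator_one_mem_of_measure_ne_top {A : Set α} (hA : MeasurableSet A)
    (hAfin : μ A ≠ ∞) : X.Mem (A.indicator 1) := by
  obtain ⟨B, hB, hBpos, hBfin, hBoc⟩ := X.exists_indicator_one_mem_oc hXa
  obtain ⟨η, hη, hsmall⟩ := X.exists_N_indicator_one_le hμ hsymm hB hBpos hBfin hBoc one_pos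
  suffices h : ∀ k : ℕ, ∀ A, MeasurableSet A → μ A ≤ k * ENNReal.ofReal η →
      X.Mem (A.indicator 1) by
    obtain ⟨k, hk⟩ := ENNReal.exists_nat_mul_gt (ENNReal.ofReal_pos.2 hη).ne' hAfin
    exact h k A hA hk.le
  intro k
  induction k with
  | zero => exact fun A hA hA0 => (hsmall A hA (hA0.trans (by simp))).1
  | succ k ih =>
    intro A hA hAk
    rcases le_total (μ A) (ENNReal.ofReal η) with hAη | hηA
    · exact (hsmall A hA hAη).1
    obtain ⟨A', hA'A, hA', hA'η⟩ := hμ hA (ne_top_of_le_ne_top (by finiteness) hAk) _ hηA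
    rw [← union_sdiff_cancel hA'A, indicator_union_of_disjoint disjoint_sdiff_right]
    refine X.mem_add _ _ (hsmall A' hA' hA'η.le).1 (ih _ (hA.diff hA') ?_)
    rw [measure_sdiff hA'A hA'.nullMeasurableSet (hA'η ▸ ENNReal.ofReal_ne_top), hA'η,
      tsub_le_iff_right]
    simpa [add_mul] using hAk

/-- By Egorov, `uₙ → 0` uniformly on `E` outside a set `t` of small measure, so eventually
`uₙ ≤ ε 𝟙_E + |M| 𝟙_t`, and both terms have small norm. -/
theorem mem_oc_of_ae_abs_le_indicator {f : α → ℝ} (hf : X.Mem f) {E : Set α}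
    (hE : MeasurableSet E) (hEfin : μ E ≠ ∞) {M : ℝ}
    (hbd : ∀ᵐ x ∂μ, |f x| ≤ M * E.indicator 1 x) : f ∈ X.oc := by
  obtain ⟨B, hB, hBpos, hBfin, hBoc⟩ := X.exists_indicator_one_mem_oc hXa
  have hEmem := X.indicator_one_mem_of_measure_ne_top hμ hsymm hXa hE hEfin
  refine ⟨hf, fun u hu hbd' _ hlim => ?_⟩
  refine .of_forall_eventually_le_mul (C := X.N (E.indicator 1) + |M|) (fun n => X.N_nonneg _)
    fun ε hε => ?_
  obtain ⟨η, hη, hsmall⟩ := X.exists_N_indicator_one_le hμ hsymm hB hBpos hBfin hBoc hε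
  have hum n := X.measurable _ (hu n)
  have hmk : ∀ᵐ x ∂μ, ∀ n, u n x = (hum n).mk _ x := ae_all_iff.2 fun n => (hum n).ae_eq_mk
  obtain ⟨t, htE, ht, htη, hunif⟩ := tendstoUniformlyOn_of_ae_tendsto
    (fun n => (hum n).measurable_mk.stronglyMeasurable) stronglyMeasurable_const hE hEfin
    (by filter_upwards [hlim, hmk] with x hx hxmk _ using by simpa only [hxmk] using hx) hη
  obtain ⟨htmem, htN⟩ := hsmall t ht htη
  set v : α → ℝ := ε • E.indicator 1 + |M| • t.indicator 1
  have hv : X.Mem v := X.mem_add _ _ (X.mem_smul _ _ hEmem) (X.mem_smul _ _ htmem)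
  filter_upwards [Metric.tendstoUniformlyOn_iff.1 hunif ε hε] with n hn
  have hpt : ∀ᵐ x ∂μ, |u n x| ≤ |v x| := by
    filter_upwards [hbd' n, hbd, hmk] with x hux hfx hxmk
    have hv0 : 0 ≤ ε * E.indicator 1 x + |M| * t.indicator 1 x := by
      have := indicator_nonneg (fun _ _ => zero_le_one) x (s := E) (f := (1 : α → ℝ))
      have := indicator_nonneg (fun _ _ => zero_le_one) x (s := t) (f := (1 : α → ℝ))
      positivity
    change |u n x| ≤ |ε * E.indicator 1 x + |M| * t.indicator 1 x|
    rw [abs_of_nonneg hux.1, abs_of_nonneg hv0]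
    by_cases hxt : x ∈ t
    · have hxE := htE hxt
      simp only [indicator_of_mem hxE, indicator_of_mem hxt, Pi.one_apply, mul_one] at hfx ⊢
      linarith [hux.2, le_abs_self M]
    by_cases hxE : x ∈ E
    · have := hn x ⟨hxE, hxt⟩
      rw [dist_zero_left, Real.norm_eq_abs, ← hxmk] at this
      simp only [indicator_of_mem hxE, indicator_of_notMem hxt, Pi.one_apply]
      linarith [le_abs_self (u n x)]
    · simp only [indicator_of_notMem hxE, mul_zero] at hfx
      simp only [indicator_of_notMem hxE, indicator_of_notMem hxt]
      linarith [hux.2]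
  calc X.N (u n) ≤ X.N v := (X.ideal _ _ (hum n) hpt hv).2
    _ ≤ ε * X.N (E.indicator 1) + |M| * X.N (t.indicator 1) :=
      (X.N_add _ _ (X.mem_smul _ _ hEmem) (X.mem_smul _ _ htmem)).trans_eq
        (by rw [X.N_smul, X.N_smul, abs_of_pos hε, abs_abs])
    _ ≤ ε * X.N (E.indicator 1) + |M| * ε := by gcongr
    _ = ε * (X.N (E.indicator 1) + |M|) := by ring

end BanachIdealSpace

theorem Real.volume_setOf_pos_ofReal_lt (c : ℝ≥0∞) :
    volume {t : ℝ | 0 < t ∧ ENNReal.ofReal t < c} = c := by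
  rcases eq_or_ne c ∞ with rfl | hc
  · rw [← Real.volume_Ioi (a := 0)]
    congr 1
    ext t
    simp [ENNReal.ofReal_lt_top]
  · have : {t : ℝ | 0 < t ∧ ENNReal.ofReal t < c} = Ioo 0 c.toReal := by
      ext t
      simp only [mem_ofPred_eq, mem_Ioo]
      exact and_congr_right fun ht => ENNReal.ofReal_lt_iff_lt_toReal ht.le hc
    rw [this, Real.volume_Ioo, sub_zero, ENNReal.ofReal_toReal hc]

section Rearrangement

variable {α : Type*} [MeasurableSpace α] {μ : Measure α} {f : α → ℝ}

theorem rear_nonneg (t : ℝ) : 0 ≤ rear μ f t :=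
  Real.sInf_nonneg fun _ h => h.1.le

theorem rear_eq_zero_of_forall_measure_eq_top (h : ∀ s, μ {x | s < |f x|} = ∞) :
    rear μ f = 0 := by
  funext t
  have : {lam : ℝ | 0 < lam ∧ μ {x | lam < |f x|} ≤ ENNReal.ofReal t} = ∅ :=
    eq_empty_of_forall_notMem fun lam hlam => ENNReal.ofReal_ne_top (top_le_iff.1 (h lam ▸ hlam.2))
  rw [rear, this, Real.sInf_empty, Pi.zero_apply]

theorem exists_lt_measure_lt_abs {lam : ℝ} {c : ℝ≥0∞} (h : c < μ {x | lam < |f x|}) :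
    ∃ s, lam < s ∧ c < μ {x | s < |f x|} := by
  have hU : (⋃ n : ℕ, {x | lam + 1 / ((n : ℝ) + 1) < |f x|}) = {x | lam < |f x|} := by
    ext x
    simp only [mem_iUnion, mem_ofPred_eq]
    refine ⟨fun ⟨n, hn⟩ => lt_of_le_of_lt (by simp; positivity) hn, fun hx => ?_⟩
    obtain ⟨n, hn⟩ := exists_nat_one_div_lt (sub_pos.2 hx)
    exact ⟨n, by linarith⟩
  have hmono : Monotone fun n : ℕ => {x | lam + 1 / ((n : ℝ) + 1) < |f x|} :=
    fun m n hmn x hx => lt_of_le_of_lt (add_le_add_right (Nat.one_div_le_one_div hmn) lam) hx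
  have := tendsto_measure_iUnion_atTop (μ := μ) hmono
  rw [hU] at this
  obtain ⟨n, hn⟩ := (this.eventually (eventually_gt_nhds h)).exists
  exact ⟨lam + 1 / ((n : ℝ) + 1), by simp; positivity, hn⟩

theorem exists_pos_measure_lt_abs_le (hf : AEMeasurable f μ)
    (hfin : ∃ s, μ {x | s < |f x|} ≠ ∞) {t : ℝ} (ht : 0 < t) :
    ∃ s, 0 < s ∧ μ {x | s < |f x|} ≤ ENNReal.ofReal t := by
  have hlim := tendsto_measure_iInter_atTop (μ := μ) (s := fun s : ℝ => {x | s < |f x|})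
    (fun s => nullMeasurableSet_lt aemeasurable_const hf.abs)
    (fun a b hab x hx => lt_of_le_of_lt hab hx) hfin
  rw [show (⋂ s : ℝ, {x | s < |f x|}) = ∅ from eq_empty_of_forall_notMem fun x hx =>
    lt_irrefl |f x| (mem_iInter.1 hx |f x|), measure_empty] at hlim
  obtain ⟨s, hs, hs0⟩ := ((hlim.eventually (eventually_le_nhds (ENNReal.ofReal_pos.2 ht))).and
    (eventually_gt_atTop 0)).exists
  exact ⟨s, hs0, hs⟩

theorem lt_rear_iff (hf : AEMeasurable f μ) (hfin : ∃ s, μ {x | s < |f x|} ≠ ∞) {t lam : ℝ}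
    (ht : 0 < t) (hlam : 0 < lam) :
    lam < rear μ f t ↔ ENNReal.ofReal t < μ {x | lam < |f x|} := by
  have hbdd : BddBelow {r : ℝ | 0 < r ∧ μ {x | r < |f x|} ≤ ENNReal.ofReal t} :=
    ⟨0, fun _ h => h.1.le⟩
  refine ⟨fun h => ?_, fun h => ?_⟩
  · by_contra! hle
    exact (csInf_le hbdd ⟨hlam, hle⟩).not_gt h
  · obtain ⟨s, hlams, hs⟩ := exists_lt_measure_lt_abs h
    refine hlams.trans_le (le_csInf (exists_pos_measure_lt_abs_le hf hfin ht) fun r hr => ?_)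
    by_contra! hrs
    exact (hs.trans_le (measure_mono fun x hx => hrs.trans hx)).not_ge hr.2

theorem antitoneOn_rear (hf : AEMeasurable f μ) : AntitoneOn (rear μ f) (Ioi 0) := by
  by_cases hfin : ∃ s, μ {x | s < |f x|} ≠ ∞
  · intro t ht t' _ htt'
    exact csInf_le_csInf ⟨0, fun _ h => h.1.le⟩ (exists_pos_measure_lt_abs_le hf hfin ht)
      fun r hr => ⟨hr.1, hr.2.trans (ENNReal.ofReal_le_ofReal htt')⟩
  · push Not at hfin
    rw [rear_eq_zero_of_forall_measure_eq_top hfin]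
    exact antitoneOn_const

theorem volume_restrict_setOf_lt_abs_rear (hf : AEMeasurable f μ)
    (hfin : ∃ s, μ {x | s < |f x|} ≠ ∞) {lam : ℝ} (hlam : 0 < lam) :
    volume.restrict (Ioi 0) {t | lam < |rear μ f t|} = μ {x | lam < |f x|} := by
  have : {t | lam < |rear μ f t|} ∩ Ioi 0 =
      {t : ℝ | 0 < t ∧ ENNReal.ofReal t < μ {x | lam < |f x|}} := by
    ext t
    simp only [mem_inter_iff, mem_ofPred_eq, mem_Ioi, abs_of_nonneg (rear_nonneg t)]
    exact ⟨fun ⟨h, ht⟩ => ⟨ht, (lt_rear_iff hf hfin ht hlam).1 h⟩,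
      fun ⟨ht, h⟩ => ⟨(lt_rear_iff hf hfin ht hlam).2 h, ht⟩⟩
  rw [Measure.restrict_apply' measurableSet_Ioi, this, Real.volume_setOf_pos_ofReal_lt]

end Rearrangement

theorem BanachIdealSpace.rear_mem (X : BanachIdealSpace ℝ (volume.restrict (Ioi 0)))
    (hsymm : X.Symmetric) {f : ℝ → ℝ} (hf : X.Mem f) :
    X.Mem (rear (volume.restrict (Ioi 0)) f) := by
  have hfm := X.measurable f hf
  by_cases hfin : ∃ s, volume.restrict (Ioi 0) {x | s < |f x|} ≠ ∞
  · exact (hsymm _ f (aemeasurable_restrict_of_antitoneOn measurableSet_Ioi (antitoneOn_rear hfm))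
      (fun lam hlam => volume_restrict_setOf_lt_abs_rear hfm hfin hlam) hf).1
  · push Not at hfin
    rw [rear_eq_zero_of_forall_measure_eq_top hfin]
    exact X.mem_zero

/-- At `n = 0` the set is `Ioi 0`, because `1 / 0 = 0`. -/
theorem antitone_Ioo_union_Ioi : Antitone fun n : ℕ => Ioo (0 : ℝ) (1 / n) ∪ Ioi (n : ℝ) := by
  intro m n hmn
  rcases Nat.eq_zero_or_pos m with rfl | hm
  · intro x hx
    simp only [Nat.cast_zero, div_zero, Ioo_self, empty_union, mem_Ioi]
    rcases hx with hx | hx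
    · exact hx.1
    · exact (Nat.cast_nonneg n).trans_lt hx
  · have hmn' : (m : ℝ) ≤ n := Nat.cast_le.2 hmn
    exact union_subset_union (Ioo_subset_Ioo_right (one_div_le_one_div_of_le (by positivity) hmn'))
      (Ioi_subset_Ioi hmn')

theorem eventually_notMem_Ioo_union_Ioi {x : ℝ} (hx : 0 < x) :
    ∀ᶠ n : ℕ in atTop, x ∉ Ioo (0 : ℝ) (1 / n) ∪ Ioi (n : ℝ) := by
  filter_upwards [tendsto_one_div_atTop_nhds_zero_nat.eventually (eventually_le_nhds hx),
    tendsto_natCast_atTop_atTop.eventually_ge_atTop x] with n h1 h2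
  rintro (h | h)
  · exact h.2.not_ge h1
  · exact (mem_Ioi.1 h).not_ge h2

theorem abs_indicator_compl_Ioo_union_Ioi_le {G : ℝ → ℝ} (hG : AntitoneOn G (Ioi 0)) {n : ℕ}
    (hn : 1 ≤ n) {x : ℝ} (hx : 0 < x) :
    |(Ioo (0 : ℝ) (1 / n) ∪ Ioi (n : ℝ))ᶜ.indicator G x| ≤
      (|G (1 / n)| + |G n|) * (Icc (1 / (n : ℝ)) n).indicator 1 x := by
  by_cases hxS : x ∈ Ioo (0 : ℝ) (1 / n) ∪ Ioi (n : ℝ)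
  · rw [indicator_of_notMem (notMem_compl_iff.2 hxS), abs_zero]
    exact mul_nonneg (by positivity) (indicator_nonneg (fun _ _ => zero_le_one) x)
  have hlo : 1 / (n : ℝ) ≤ x := not_lt.1 fun h => hxS (Or.inl ⟨hx, h⟩)
  have hhi : x ≤ n := not_lt.1 fun h => hxS (Or.inr h)
  have hn0 : (0 : ℝ) < 1 / n := by positivity
  rw [indicator_of_mem hxS, indicator_of_mem (show x ∈ Icc (1 / (n : ℝ)) n from ⟨hlo, hhi⟩),
    Pi.one_apply, mul_one]
  have h1 := hG hn0 hx hlo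
  have h2 := hG hx (hx.trans_le hhi) hhi
  exact abs_le.2 ⟨by linarith [neg_abs_le (G n), abs_nonneg (G (1 / n))],
    by linarith [le_abs_self (G (1 / n)), abs_nonneg (G n)]⟩

theorem BanachIdealSpace.indicator_compl_Ioo_union_Ioi_mem_oc
    (X : BanachIdealSpace ℝ (volume.restrict (Ioi 0))) (hsymm : X.Symmetric)
    (hXa : ∃ g ∈ X.oc, ¬ ∀ᵐ x ∂(volume.restrict (Ioi (0 : ℝ))), g x = 0)
    {G : ℝ → ℝ} (hG : X.Mem G) (hanti : AntitoneOn G (Ioi 0)) {n : ℕ} (hn : 1 ≤ n) :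
    (Ioo (0 : ℝ) (1 / n) ∪ Ioi (n : ℝ))ᶜ.indicator G ∈ X.oc :=
  X.mem_oc_of_ae_abs_le_indicator (Real.hasIntermediateSubsets_volume.restrict measurableSet_Ioi)
    hsymm hXa (X.mem_indicator hG (measurableSet_Ioo.union measurableSet_Ioi).compl)
    measurableSet_Icc (ne_top_of_le_ne_top measure_Icc_lt_top.ne (Measure.restrict_apply_le _ _))
    (by filter_upwards [ae_restrict_mem measurableSet_Ioi] with x hx using
      abs_indicator_compl_Ioo_union_Ioi_le hanti hn hx)

/-- Let `X` be a rearrangement invariant Banach function space on `(0, ∞)` whose ideal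
`X_a` of order continuous elements is non-trivial. Then for every `f ∈ X`,
`dist (f*, X_a) = lim_n ‖ f* · χ_{(0, 1/n) ∪ (n, ∞)} ‖_X`. -/
theorem dist_rearrangement_to_oc_eq_lim
    (X : BanachIdealSpace ℝ (volume.restrict (Set.Ioi (0 : ℝ))))
    (hsymm : X.Symmetric)
    (hXa : ∃ g ∈ X.oc, ¬ (∀ᵐ x ∂(volume.restrict (Set.Ioi (0 : ℝ))), g x = 0))
    (f : ℝ → ℝ) (hf : X.Mem f) :
    Tendsto
      (fun n : ℕ => X.N (Set.indicator (Set.Ioo (0 : ℝ) (1 / (n : ℝ)) ∪ Set.Ioi (n : ℝ))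
        (rear (volume.restrict (Set.Ioi (0 : ℝ))) f)))
      atTop
      (𝓝 (distIn X.N (rear (volume.restrict (Set.Ioi (0 : ℝ))) f) X.oc)) := by
  set F := rear (volume.restrict (Ioi (0 : ℝ))) f
  set S : ℕ → Set ℝ := fun n => Ioo (0 : ℝ) (1 / n) ∪ Ioi (n : ℝ)
  have hF : X.Mem F := X.rear_mem hsymm hf
  have hSm : ∀ n, MeasurableSet (S n) := fun n => measurableSet_Ioo.union measurableSet_Ioi
  have hanti : Antitone fun n => X.N ((S n).indicator F) := fun m n hmn =>
    X.N_indicator_mono hF (hSm n) (hSm m) (antitone_Ioo_union_Ioi hmn)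
  have hlim := tendsto_atTop_ciInf hanti ⟨0, by rintro _ ⟨n, rfl⟩; exact X.N_nonneg _⟩
  convert hlim using 2
  refine le_antisymm (ge_of_tendsto hlim (eventually_atTop.2 ⟨1, fun n hn => ?_⟩))
    (X.le_distIn fun h hh => ?_)
  · have := X.distIn_le (f := F) (X.indicator_compl_Ioo_union_Ioi_mem_oc hsymm hXa hF
      (antitoneOn_rear (X.measurable f hf)) hn)
    rwa [indicator_compl, sub_sub_cancel] at this
  · have htail := X.tendsto_N_indicator_of_mem_oc hh hSm antitone_Ioo_union_Ioi
      (by filter_upwards [ae_restrict_mem measurableSet_Ioi] with x hx using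
        eventually_notMem_Ioo_union_Ioi hx)
    exact le_of_tendsto_of_tendsto' hlim (by simpa using tendsto_const_nhds.add htail)
      fun n => X.N_indicator_le_N_sub_add hF hh.1 (hSm n)
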